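/- arXiv:1507.00930 — 2 statements merged into one kernel-verified Lean document; each statement's English description precedes it below -/
import Mathlib

section
/- Let $\lambda \in (1/2, 1)$, let $c > 0$ be a constant, and let $\epsilon > 0$ satisfy $c\,\epsilon^{2\lambda - 1} < 1$. Then the sum $\sum_{k=1}^{\lfloor \epsilon n \rfloor} c^k (k/n)^{(2\lambda-1)k}$ is $O(n^{1/2 - \lambda})$ as $n \to \infty$. -/
open Filter Topology

theorem stmt_12 (c ε lam : ℝ) (hc : 0 < c) (hlam1 : 1 / 2 < lam) (hlam2 : lam < 1)
    (hε : 0 < ε) (h : c * ε ^ (2 * lam - 1) < 1) :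
    (fun n : ℕ => ∑ k ∈ Finset.Icc 1 ⌊ε * n⌋₊, c ^ k * ((k : ℝ) / n) ^ ((2 * lam - 1) * k))
      =O[atTop] (fun n : ℕ => (n : ℝ) ^ ((1 : ℝ) / 2 - lam)) := by
  have hα : 0 < 2 * lam - 1 := by linarith
  set r : ℝ := c * ε ^ (2 * lam - 1) with hrdef
  have hr0 : 0 < r := mul_pos hc (Real.rpow_pos_of_pos hε _)
  -- q n := c * n ^ (1/2 - lam) tends to 0
  have hq0 : Tendsto (fun n : ℕ => c * (n : ℝ) ^ ((1 : ℝ) / 2 - lam)) atTop (𝓝 0) := by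
    have h1 : Tendsto (fun x : ℝ => x ^ ((1 : ℝ) / 2 - lam)) atTop (𝓝 0) := by
      have := tendsto_rpow_neg_atTop (y := lam - 1 / 2) (by linarith)
      simpa [neg_sub] using this
    have h2 := (h1.comp tendsto_natCast_atTop_atTop (α := ℕ)).const_mul c
    simpa using h2
  have hE2 : ∀ᶠ n : ℕ in atTop, c * (n : ℝ) ^ ((1 : ℝ) / 2 - lam) ≤ 1 / 2 :=
    hq0.eventually_le_const (by norm_num)
  -- Nat.sqrt tends to infinity
  have hsq : Tendsto (fun n : ℕ => Nat.sqrt n) atTop atTop := by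
    apply tendsto_atTop_atTop_of_monotone (fun a b hab => Nat.sqrt_le_sqrt hab)
    intro b
    exact ⟨b ^ 2, (Nat.sqrt_eq' b).ge⟩
  -- (ε/r) * m^4 * r^m → 0
  have hT0 : Tendsto (fun m : ℕ => ε / r * ((m : ℝ) ^ 4 * r ^ m)) atTop (𝓝 0) := by
    have hs : Tendsto (fun m : ℕ => (m : ℝ) ^ 4 * r ^ m) atTop (𝓝 0) := by
      have : Summable (fun m : ℕ => (m : ℝ) ^ 4 * r ^ m) :=
        summable_pow_mul_geometric_of_norm_lt_one 4 (by rw [Real.norm_eq_abs, abs_of_pos hr0]; exact h)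
      exact this.tendsto_atTop_zero
    simpa using hs.const_mul (ε / r)
  have hT : Tendsto (fun n : ℕ => ε / r * (((Nat.sqrt n + 1 : ℕ) : ℝ) ^ 4 * r ^ (Nat.sqrt n + 1)))
      atTop (𝓝 0) := hT0.comp ((tendsto_add_atTop_nat 1).comp hsq)
  have hE3' : ∀ᶠ n : ℕ in atTop,
      ε / r * (((Nat.sqrt n + 1 : ℕ) : ℝ) ^ 4 * r ^ (Nat.sqrt n + 1)) ≤ 1 :=
    hT.eventually_le_const one_pos
  -- tail estimate: ε * n * r ^ sqrt n ≤ n ^ (1/2 - lam) eventually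
  have hE3 : ∀ᶠ n : ℕ in atTop,
      ε * n * r ^ Nat.sqrt n ≤ (n : ℝ) ^ ((1 : ℝ) / 2 - lam) := by
    filter_upwards [hE3', eventually_ge_atTop 1] with n h3 hn1
    have hn0 : (0 : ℝ) < n := by exact_mod_cast hn1
    have hn1' : (1 : ℝ) ≤ n := by exact_mod_cast hn1
    set s : ℕ := Nat.sqrt n with hs
    -- n ≤ (s+1)^2
    have hns : (n : ℝ) ≤ ((s + 1 : ℕ) : ℝ) ^ 2 := by
      exact_mod_cast (Nat.lt_succ_sqrt' n).le
    -- n ^ (lam + 1/2) ≤ (s+1)^4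
    have hA : (n : ℝ) ^ (lam + 1 / 2) ≤ ((s + 1 : ℕ) : ℝ) ^ 4 := by
      have h1 : (n : ℝ) ^ (lam + 1 / 2) ≤ (n : ℝ) ^ (2 : ℝ) :=
        Real.rpow_le_rpow_of_exponent_le hn1' (by linarith)
      have h2 : (n : ℝ) ^ (2 : ℝ) = (n : ℝ) ^ (2 : ℕ) := by
        rw [show ((2:ℝ)) = ((2:ℕ):ℝ) by norm_num, Real.rpow_natCast]
      have h3 : (n : ℝ) ^ (2 : ℕ) ≤ (((s + 1 : ℕ) : ℝ) ^ 2) ^ (2 : ℕ) := by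
        apply pow_le_pow_left₀ (by positivity) hns
      calc (n : ℝ) ^ (lam + 1 / 2) ≤ (n : ℝ) ^ (2 : ℝ) := h1
        _ = (n : ℝ) ^ (2 : ℕ) := h2
        _ ≤ (((s + 1 : ℕ) : ℝ) ^ 2) ^ (2 : ℕ) := h3
        _ = ((s + 1 : ℕ) : ℝ) ^ 4 := by ring
    -- ε * n^(lam+1/2) * r^s ≤ 1
    have hB : ε * (n : ℝ) ^ (lam + 1 / 2) * r ^ s ≤ 1 := by
      have key : ε * ((s + 1 : ℕ) : ℝ) ^ 4 * r ^ s
          = ε / r * (((s + 1 : ℕ) : ℝ) ^ 4 * r ^ (s + 1)) := by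
        field_simp
        ring
      calc ε * (n : ℝ) ^ (lam + 1 / 2) * r ^ s
          ≤ ε * ((s + 1 : ℕ) : ℝ) ^ 4 * r ^ s := by
            apply mul_le_mul_of_nonneg_right _ (by positivity)
            exact mul_le_mul_of_nonneg_left hA hε.le
        _ = ε / r * (((s + 1 : ℕ) : ℝ) ^ 4 * r ^ (s + 1)) := key
        _ ≤ 1 := h3
    -- combine
    have hsplit : (n : ℝ) = (n : ℝ) ^ (lam + 1 / 2) * (n : ℝ) ^ ((1 : ℝ) / 2 - lam) := by
      rw [← Real.rpow_add hn0, show lam + 1 / 2 + ((1:ℝ) / 2 - lam) = 1 by ring, Real.rpow_one]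
    calc ε * n * r ^ s
        = (ε * (n : ℝ) ^ (lam + 1 / 2) * r ^ s) * (n : ℝ) ^ ((1 : ℝ) / 2 - lam) := by
          conv_lhs => rw [hsplit]
          ring
      _ ≤ 1 * (n : ℝ) ^ ((1 : ℝ) / 2 - lam) := by
          apply mul_le_mul_of_nonneg_right hB (by positivity)
      _ = (n : ℝ) ^ ((1 : ℝ) / 2 - lam) := one_mul _
  rw [Asymptotics.isBigO_iff]
  refine ⟨2 * c + 1, ?_⟩
  filter_upwards [hE2, hE3, eventually_ge_atTop 1] with n h2 h3 hn1
  have hn0 : (0 : ℝ) < n := by exact_mod_cast hn1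
  have hn1' : (1 : ℝ) ≤ n := by exact_mod_cast hn1
  set q : ℝ := c * (n : ℝ) ^ ((1 : ℝ) / 2 - lam) with hqdef
  have hq0' : 0 < q := mul_pos hc (Real.rpow_pos_of_pos hn0 _)
  set M : ℕ := ⌊ε * n⌋₊ with hM
  set s : ℕ := Nat.sqrt n with hs
  -- termwise bound
  have hterm : ∀ k ∈ Finset.Icc 1 M,
      c ^ k * ((k : ℝ) / n) ^ ((2 * lam - 1) * k) ≤ q ^ k + r ^ s := by
    intro k hk
    obtain ⟨hk1, hkM⟩ := Finset.mem_Icc.mp hk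
    have hkpos : (0 : ℝ) < k := by exact_mod_cast hk1
    have hkn0 : 0 ≤ (k : ℝ) / n := by positivity
    by_cases hks : k ≤ s
    · -- head: k ≤ sqrt n
      have hkr : (k : ℝ) ≤ Real.sqrt n := by
        have h1 : ((k : ℝ)) ^ 2 ≤ (n : ℝ) := by
          have : k ^ 2 ≤ n := le_trans (Nat.pow_le_pow_left hks 2) (Nat.sqrt_le' n)
          exact_mod_cast this
        have := Real.sqrt_le_sqrt h1
        rwa [Real.sqrt_sq hkpos.le] at this
      have hbase : (k : ℝ) / n ≤ (n : ℝ) ^ (-(1 : ℝ) / 2) := by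
        rw [div_le_iff₀ hn0]
        calc (k : ℝ) ≤ Real.sqrt n := hkr
          _ = (n : ℝ) ^ ((1 : ℝ) / 2) := by rw [Real.sqrt_eq_rpow]
          _ = (n : ℝ) ^ (-(1 : ℝ) / 2) * n := by
              rw [show ((1:ℝ)/2) = -(1:ℝ)/2 + 1 by norm_num, Real.rpow_add hn0, Real.rpow_one]
      have h1 : ((k : ℝ) / n) ^ ((2 * lam - 1) * k)
          ≤ ((n : ℝ) ^ (-(1 : ℝ) / 2)) ^ ((2 * lam - 1) * k) := by
        apply Real.rpow_le_rpow hkn0 hbase (by positivity)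
      have h2 : ((n : ℝ) ^ (-(1 : ℝ) / 2)) ^ ((2 * lam - 1) * k)
          = ((n : ℝ) ^ ((1 : ℝ) / 2 - lam)) ^ k := by
        rw [← Real.rpow_natCast ((n : ℝ) ^ ((1 : ℝ) / 2 - lam)) k,
          ← Real.rpow_mul hn0.le, ← Real.rpow_mul hn0.le]
        congr 1
        ring
      have : c ^ k * ((k : ℝ) / n) ^ ((2 * lam - 1) * k) ≤ q ^ k := by
        rw [hqdef, mul_pow]
        apply mul_le_mul_of_nonneg_left _ (by positivity)
        rw [← h2]; exact h1
      nlinarith [pow_nonneg hr0.le s]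
    · -- tail: k > sqrt n
      push_neg at hks
      have hkε : (k : ℝ) / n ≤ ε := by
        rw [div_le_iff₀ hn0]
        calc (k : ℝ) ≤ (M : ℝ) := by exact_mod_cast hkM
          _ ≤ ε * n := Nat.floor_le (by positivity)
      have h1 : ((k : ℝ) / n) ^ ((2 * lam - 1) * k) ≤ ε ^ ((2 * lam - 1) * k) :=
        Real.rpow_le_rpow hkn0 hkε (by positivity)
      have h2 : ε ^ ((2 * lam - 1) * k) = (ε ^ (2 * lam - 1)) ^ k := by
        rw [← Real.rpow_natCast (ε ^ (2 * lam - 1)) k, ← Real.rpow_mul hε.le]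
      have h3 : c ^ k * ((k : ℝ) / n) ^ ((2 * lam - 1) * k) ≤ r ^ k := by
        rw [hrdef, mul_pow]
        apply mul_le_mul_of_nonneg_left _ (by positivity)
        rw [← h2]; exact h1
      have h4 : r ^ k ≤ r ^ s := pow_le_pow_of_le_one hr0.le h.le hks.le
      nlinarith [pow_nonneg hq0'.le k]
  -- sum bound
  have hsum : ∑ k ∈ Finset.Icc 1 M, c ^ k * ((k : ℝ) / n) ^ ((2 * lam - 1) * k)
      ≤ 2 * q + (M : ℝ) * r ^ s := by
    calc ∑ k ∈ Finset.Icc 1 M, c ^ k * ((k : ℝ) / n) ^ ((2 * lam - 1) * k)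
        ≤ ∑ k ∈ Finset.Icc 1 M, (q ^ k + r ^ s) := Finset.sum_le_sum hterm
      _ = (∑ k ∈ Finset.Icc 1 M, q ^ k) + (M : ℝ) * r ^ s := by
          rw [Finset.sum_add_distrib, Finset.sum_const, Nat.card_Icc]
          simp [nsmul_eq_mul]
      _ ≤ 2 * q + (M : ℝ) * r ^ s := by
          gcongr ?_ + _
          -- geometric sum bound
          have hq12 : q ≤ 1 / 2 := h2
          have hgeo : ∑ k ∈ Finset.Icc 1 M, q ^ k = q * ∑ i ∈ Finset.range M, q ^ i := by
            rw [show Finset.Icc 1 M = Finset.Ico 1 (M + 1) by rfl, Finset.sum_Ico_eq_sum_range]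
            simp [pow_succ, pow_add, Finset.mul_sum, mul_comm]
          rw [hgeo]
          have hb : ∑ i ∈ Finset.range M, q ^ i ≤ 2 := by
            have h1 : ∑ i ∈ Finset.range M, q ^ i ≤ ∑' i : ℕ, q ^ i :=
              Summable.sum_le_tsum _ (fun i _ => by positivity)
                (summable_geometric_of_lt_one hq0'.le (by linarith))
            rw [tsum_geometric_of_lt_one hq0'.le (by linarith)] at h1
            calc ∑ i ∈ Finset.range M, q ^ i ≤ (1 - q)⁻¹ := h1
              _ ≤ 2 := by
                rw [inv_le_comm₀ (by linarith) (by norm_num)]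
                linarith
          calc q * ∑ i ∈ Finset.range M, q ^ i ≤ q * 2 :=
              mul_le_mul_of_nonneg_left hb hq0'.le
            _ = 2 * q := by ring
  -- finish
  have hMr : (M : ℝ) * r ^ s ≤ (n : ℝ) ^ ((1 : ℝ) / 2 - lam) := by
    calc (M : ℝ) * r ^ s ≤ (ε * n) * r ^ s := by
          apply mul_le_mul_of_nonneg_right (Nat.floor_le (by positivity)) (by positivity)
      _ ≤ (n : ℝ) ^ ((1 : ℝ) / 2 - lam) := h3
  have hpos : 0 < (n : ℝ) ^ ((1 : ℝ) / 2 - lam) := Real.rpow_pos_of_pos hn0 _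
  rw [Real.norm_eq_abs, Real.norm_eq_abs, abs_of_pos hpos, abs_of_nonneg]
  · calc ∑ k ∈ Finset.Icc 1 M, c ^ k * ((k : ℝ) / n) ^ ((2 * lam - 1) * k)
        ≤ 2 * q + (M : ℝ) * r ^ s := hsum
      _ ≤ 2 * q + (n : ℝ) ^ ((1 : ℝ) / 2 - lam) := by linarith
      _ = (2 * c + 1) * (n : ℝ) ^ ((1 : ℝ) / 2 - lam) := by
          rw [hqdef]; ring
  · apply Finset.sum_nonneg
    intro k hk
    have : (0 : ℝ) ≤ (k : ℝ) / n := by positivity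
    positivity
end

section
/- Let $H(x) = -x \log_2 x - (1-x)\log_2(1-x)$ be the binary entropy function and let $d_1 \ge 160$ and $d_2 \ge 4$ be integers. Then for all $\alpha \in (0, 1/d_2^2]$, $2H(\alpha) + \frac{d_1}{8}\alpha \log_2(2 d_2 \alpha) \le \alpha \log_2(\alpha)\left(\frac{d_1}{32} - 4\right)$. -/
namespace Real

lemma le_one_div_sixteen_of_le_one_div_sq {d α : ℝ} (hd : 4 ≤ d) (hα : α ≤ 1 / d ^ 2) :
    α ≤ 1 / 16 :=
  hα.trans (by gcongr; nlinarith)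

lemma logb_two_le_neg_four {α : ℝ} (hα0 : 0 < α) (hα : α ≤ 1 / 16) : logb 2 α ≤ -4 := by
  rw [logb_le_iff_le_rpow one_lt_two hα0, rpow_neg zero_le_two]
  norm_num
  linarith

lemma logb_two_mul_le_quarter_logb {d α : ℝ} (hd : 4 ≤ d) (hα0 : 0 < α) (hα : α ≤ 1 / d ^ 2) :
    logb 2 (2 * d * α) ≤ logb 2 α / 4 := by
  have hd_sq : d ^ 2 ≤ α⁻¹ := by
    rwa [le_inv_comm₀ (by positivity) hα0, ← one_div]
  have hlogb_d : logb 2 d ≤ -logb 2 α / 2 := by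
    have := logb_le_logb_of_le one_lt_two (by positivity) hd_sq
    rw [logb_pow, logb_inv] at this
    push_cast at this
    linarith
  rw [logb_mul (by positivity) hα0.ne', logb_mul two_ne_zero (by positivity),
    logb_self_eq_one one_lt_two]
  linarith [logb_two_le_neg_four hα0 (le_one_div_sixteen_of_le_one_div_sq hd hα)]

-- `x - 1 ≤ x log x` at `x = 1 - α`, and `log 2 > 1/2`.
lemma neg_one_sub_mul_logb_two_one_sub_le {α : ℝ} (hα0 : 0 ≤ α) (hα1 : α ≤ 1) :
    -((1 - α) * logb 2 (1 - α)) ≤ 2 * α := by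
  have hlog : -((1 - α) * log (1 - α)) ≤ α := by
    linarith [self_sub_one_le_mul_log (sub_nonneg.mpr hα1)]
  have hinv : (log 2)⁻¹ ≤ 2 := by
    rw [inv_le_comm₀ (by positivity) two_pos]
    linarith [log_two_gt_d9]
  calc -((1 - α) * logb 2 (1 - α)) = -((1 - α) * log (1 - α)) * (log 2)⁻¹ := by
        rw [logb, div_eq_mul_inv]; ring
    _ ≤ α * 2 := mul_le_mul hlog hinv (by positivity) hα0
    _ = 2 * α := mul_comm _ _

end Real

theorem stmt_18_general (d1 d2 : ℕ) (h2 : 4 ≤ d2) (α : ℝ)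
    (hα0 : 0 < α) (hα : α ≤ 1 / (d2 : ℝ) ^ 2) :
    2 * (-α * Real.logb 2 α - (1 - α) * Real.logb 2 (1 - α)) +
        (d1 : ℝ) / 8 * α * Real.logb 2 (2 * d2 * α) ≤
      α * Real.logb 2 α * ((d1 : ℝ) / 32 - 4) := by
  have hd2 : (4 : ℝ) ≤ d2 := by exact_mod_cast h2
  have hα16 := Real.le_one_div_sixteen_of_le_one_div_sq hd2 hα
  have hL := Real.logb_two_le_neg_four hα0 hα16
  have hentropy := Real.neg_one_sub_mul_logb_two_one_sub_le hα0.le (by linarith)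
  have hcross : (d1 : ℝ) / 8 * α * Real.logb 2 (2 * d2 * α) ≤
      (d1 : ℝ) / 8 * α * (Real.logb 2 α / 4) :=
    mul_le_mul_of_nonneg_left (Real.logb_two_mul_le_quarter_logb hd2 hα0 hα) (by positivity)
  -- after these bounds the remaining slack is `-2α (log₂ α + 2) ≥ 0`
  nlinarith [mul_le_mul_of_nonneg_left hL hα0.le]

theorem stmt_18 (d1 d2 : ℕ) (h1 : 160 ≤ d1) (h2 : 4 ≤ d2) (α : ℝ)
    (hα0 : 0 < α) (hα : α ≤ 1 / (d2 : ℝ) ^ 2) :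
    2 * (-α * Real.logb 2 α - (1 - α) * Real.logb 2 (1 - α)) +
        (d1 : ℝ) / 8 * α * Real.logb 2 (2 * d2 * α) ≤
      α * Real.logb 2 α * ((d1 : ℝ) / 32 - 4) :=
  stmt_18_general d1 d2 h2 α hα0 hα
end
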